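/- Let F be μ-strongly monotone and globally Lipschitz with constant ℓ_F, and let C be the polyhedral set {x ∈ ℝⁿ : Gx − c_g ≤ 0, Hx − c_h = 0}. If α > ℓ_F²/(4μ), then the safe monotone flow ẋ = 𝓖_α(x) is contracting with rate c = μ − ℓ_F²/(4α): for all x, y in the open set X where the flow is defined, (x − y)ᵀ(𝓖_α(x) − 𝓖_α(y)) ≤ −c‖x − y‖². In particular, the unique solution x* ∈ SOL(F, C) is globally exponentially stable: every solution satisfies ‖x(t) − x*‖ ≤ e^{−ct}‖x(0) − x*‖. -/

import Mathlib

open scoped RealInnerProductSpace BigOperators Topology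
open Set Filter

noncomputable section

/-- The polyhedral constraint set `C = {x | Gx ≤ c_g, Hx = c_h}`,
with the rows of `G` and `H` given as vectors. -/
def polyC {n m k : ℕ} (G : Fin m → EuclideanSpace ℝ (Fin n)) (cg : Fin m → ℝ)
    (H : Fin k → EuclideanSpace ℝ (Fin n)) (ch : Fin k → ℝ) :
    Set (EuclideanSpace ℝ (Fin n)) :=
  {x | (∀ i, ⟪G i, x⟫ ≤ cg i) ∧ ∀ j, ⟪H j, x⟫ = ch j}

/-- Solution set of the variational inequality `VI(F, C)`. -/
def SOL {n : ℕ} (F : EuclideanSpace ℝ (Fin n) → EuclideanSpace ℝ (Fin n))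
    (C : Set (EuclideanSpace ℝ (Fin n))) : Set (EuclideanSpace ℝ (Fin n)) :=
  {xs | xs ∈ C ∧ ∀ x ∈ C, 0 ≤ ⟪x - xs, F xs⟫}

/-- The α-restricted tangent set in the polyhedral case. -/
def polyTalpha {n m k : ℕ} (G : Fin m → EuclideanSpace ℝ (Fin n)) (cg : Fin m → ℝ)
    (H : Fin k → EuclideanSpace ℝ (Fin n)) (ch : Fin k → ℝ) (α : ℝ)
    (x : EuclideanSpace ℝ (Fin n)) : Set (EuclideanSpace ℝ (Fin n)) :=
  {ξ | (∀ i, ⟪G i, ξ⟫ ≤ -α * (⟪G i, x⟫ - cg i)) ∧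
       ∀ j, ⟪H j, ξ⟫ = -α * (⟪H j, x⟫ - ch j)}

/-- The closed-loop control-affine vector field `𝓕(x,u,v) = -F(x) - Gᵀu - Hᵀv`. -/
def polyFcl {n m k : ℕ} (F : EuclideanSpace ℝ (Fin n) → EuclideanSpace ℝ (Fin n))
    (G : Fin m → EuclideanSpace ℝ (Fin n)) (H : Fin k → EuclideanSpace ℝ (Fin n))
    (x : EuclideanSpace ℝ (Fin n)) (u : Fin m → ℝ) (v : Fin k → ℝ) :
    EuclideanSpace ℝ (Fin n) :=
  -F x - ∑ i, u i • G i - ∑ j, v j • H j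

/-- `p` is the Euclidean projection of `y` onto `K`. -/
def IsProjOn {n : ℕ} (K : Set (EuclideanSpace ℝ (Fin n)))
    (y p : EuclideanSpace ℝ (Fin n)) : Prop :=
  p ∈ K ∧ ∀ z ∈ K, ‖p - y‖ ≤ ‖z - y‖

/-- A solution of `ẋ = 𝒢(x)` remaining in the set `S` for all `t ≥ 0`. -/
def FlowSol {n : ℕ} (𝒢 : EuclideanSpace ℝ (Fin n) → EuclideanSpace ℝ (Fin n))
    (S : Set (EuclideanSpace ℝ (Fin n))) (x : ℝ → EuclideanSpace ℝ (Fin n)) : Prop :=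
  ∀ t ≥ (0:ℝ), x t ∈ S ∧ HasDerivWithinAt x (𝒢 (x t)) (Set.Ici 0) t


/-- Auxiliary: the α-restricted tangent set is convex. -/
lemma convex_polyTalpha' {n m k : ℕ} (G : Fin m → EuclideanSpace ℝ (Fin n)) (cg : Fin m → ℝ)
    (H : Fin k → EuclideanSpace ℝ (Fin n)) (ch : Fin k → ℝ) (α : ℝ)
    (x : EuclideanSpace ℝ (Fin n)) : Convex ℝ (polyTalpha G cg H ch α x) := by
  intro ξ₁ h1 ξ₂ h2 a b ha hb hab
  constructor
  · intro i
    simp only [inner_add_right, real_inner_smul_right]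
    have hA := mul_le_mul_of_nonneg_left (h1.1 i) ha
    have hB := mul_le_mul_of_nonneg_left (h2.1 i) hb
    have hab' : a * (-α * (⟪G i, x⟫ - cg i)) + b * (-α * (⟪G i, x⟫ - cg i))
        = -α * (⟪G i, x⟫ - cg i) := by rw [← add_mul, hab, one_mul]
    linarith
  · intro j
    simp only [inner_add_right, real_inner_smul_right, h1.2 j, h2.2 j]
    rw [← add_mul, hab, one_mul]

/-- Auxiliary: variational characterization of the projection onto a convex set. -/
lemma proj_vi' {n : ℕ} {K : Set (EuclideanSpace ℝ (Fin n))} (hK : Convex ℝ K)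
    {y p : EuclideanSpace ℝ (Fin n)} (h : IsProjOn K y p) :
    ∀ z ∈ K, ⟪y - p, z - p⟫ ≤ 0 := by
  obtain ⟨hp, hmin⟩ := h
  have heq : ‖y - p‖ = ⨅ w : K, ‖y - w‖ := by
    haveI : Nonempty K := ⟨⟨p, hp⟩⟩
    apply le_antisymm
    · apply le_ciInf; intro w
      rw [norm_sub_rev y p, norm_sub_rev y (w : EuclideanSpace ℝ (Fin n))]
      exact hmin w w.2
    · have hbdd : BddBelow (Set.range fun w : K => ‖y - (w : EuclideanSpace ℝ (Fin n))‖) := by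
        refine ⟨0, ?_⟩
        rintro r ⟨w, rfl⟩
        exact norm_nonneg _
      exact ciInf_le hbdd ⟨p, hp⟩
  exact (norm_eq_iInf_iff_real_inner_le_zero hK hp).mp heq

/-- Auxiliary: pointwise contraction estimate from the two variational inequalities. -/
lemma contraction_core' {n : ℕ} (F 𝒢 : EuclideanSpace ℝ (Fin n) → EuclideanSpace ℝ (Fin n))
    (x y : EuclideanSpace ℝ (Fin n)) (α μ ℓF : ℝ) (hα : 0 < α)
    (hsmono : μ * ‖x - y‖ ^ 2 ≤ ⟪x - y, F x - F y⟫)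
    (hlip : ‖F x - F y‖ ≤ ℓF * ‖x - y‖)
    (h1 : ⟪-F x - 𝒢 x, (𝒢 y + α • y - α • x) - 𝒢 x⟫ ≤ 0)
    (h2 : ⟪-F y - 𝒢 y, (𝒢 x + α • x - α • y) - 𝒢 y⟫ ≤ 0) :
    ⟪x - y, 𝒢 x - 𝒢 y⟫ ≤ -(μ - ℓF ^ 2 / (4 * α)) * ‖x - y‖ ^ 2 := by
  have e1 : (𝒢 y + α • y - α • x) - 𝒢 x = -((𝒢 x - 𝒢 y) + α • (x - y)) := by module
  have e2 : (𝒢 x + α • x - α • y) - 𝒢 y = (𝒢 x - 𝒢 y) + α • (x - y) := by module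
  have e3 : -F x - 𝒢 x = -(F x + 𝒢 x) := by module
  have e4 : -F y - 𝒢 y = -(F y + 𝒢 y) := by module
  rw [e1, e3, inner_neg_neg] at h1
  rw [e2, e4, inner_neg_left, neg_nonpos] at h2
  have hsum : ⟪(F x - F y) + (𝒢 x - 𝒢 y), (𝒢 x - 𝒢 y) + α • (x - y)⟫ ≤ 0 := by
    have e5 : (F x - F y) + (𝒢 x - 𝒢 y) = (F x + 𝒢 x) - (F y + 𝒢 y) := by module
    rw [e5, inner_sub_left]; linarith
  have hexp : ⟪(F x - F y) + (𝒢 x - 𝒢 y), (𝒢 x - 𝒢 y) + α • (x - y)⟫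
      = ⟪F x - F y, 𝒢 x - 𝒢 y⟫ + α * ⟪x - y, F x - F y⟫ + ‖𝒢 x - 𝒢 y‖ ^ 2
        + α * ⟪x - y, 𝒢 x - 𝒢 y⟫ := by
    simp only [inner_add_left, inner_add_right, real_inner_smul_right,
      real_inner_self_eq_norm_sq, real_inner_comm (x - y)]
    ring
  rw [hexp] at hsum
  have hcs : -(‖F x - F y‖ * ‖𝒢 x - 𝒢 y‖) ≤ ⟪F x - F y, 𝒢 x - 𝒢 y⟫ :=
    neg_abs_le _ |>.trans'
      (by simpa using neg_le_neg (abs_real_inner_le_norm (F x - F y) (𝒢 x - 𝒢 y)))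
  have hE2 : ‖F x - F y‖ ^ 2 ≤ ℓF ^ 2 * ‖x - y‖ ^ 2 := by
    nlinarith [norm_nonneg (F x - F y), norm_nonneg (x - y)]
  have h5 : α * ⟪x - y, 𝒢 x - 𝒢 y⟫ ≤ (ℓF ^ 2 / 4 - α * μ) * ‖x - y‖ ^ 2 := by
    have hB := mul_le_mul_of_nonneg_left hsmono (le_of_lt hα)
    nlinarith [sq_nonneg (2 * ‖𝒢 x - 𝒢 y‖ - ‖F x - F y‖)]
  have hconst : -(μ - ℓF ^ 2 / (4 * α)) = (ℓF ^ 2 / 4 - α * μ) / α := by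
    field_simp; ring
  rw [hconst, div_mul_eq_mul_div, le_div_iff₀ hα]
  nlinarith [h5]

/-- Auxiliary: exponential decay from the Lyapunov differential inequality. -/
lemma decay' {n : ℕ} (𝒢 : EuclideanSpace ℝ (Fin n) → EuclideanSpace ℝ (Fin n))
    (X : Set (EuclideanSpace ℝ (Fin n))) (xs : EuclideanSpace ℝ (Fin n)) (c : ℝ)
    (hcontr : ∀ z ∈ X, ⟪z - xs, 𝒢 z⟫ ≤ -c * ‖z - xs‖ ^ 2)
    (x : ℝ → EuclideanSpace ℝ (Fin n))
    (hx : ∀ t ≥ (0:ℝ), x t ∈ X ∧ HasDerivWithinAt x (𝒢 (x t)) (Set.Ici 0) t)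
    (t : ℝ) (ht : 0 ≤ t) : ‖x t - xs‖ ≤ Real.exp (-c * t) * ‖x 0 - xs‖ := by
  set g : ℝ → ℝ := fun s => Real.exp (2 * c * s) * ‖x s - xs‖ ^ 2 with hg
  have hderiv : ∀ s ∈ Ici (0:ℝ), HasDerivWithinAt g
      (Real.exp (2 * c * s) * (2 * c) * ‖x s - xs‖ ^ 2
        + Real.exp (2 * c * s) * (⟪x s - xs, 𝒢 (x s)⟫ + ⟪𝒢 (x s), x s - xs⟫)) (Ici 0) s := by
    intro s hs
    have hu : HasDerivWithinAt (fun r => x r - xs) (𝒢 (x s)) (Ici 0) s :=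
      (hx s hs).2.sub_const xs
    have hφ : HasDerivWithinAt (fun r => ‖x r - xs‖ ^ 2)
        (⟪x s - xs, 𝒢 (x s)⟫ + ⟪𝒢 (x s), x s - xs⟫) (Ici 0) s := by
      have := HasDerivWithinAt.inner ℝ hu hu
      simpa only [real_inner_self_eq_norm_sq] using this
    have he : HasDerivAt (fun r : ℝ => Real.exp (2 * c * r))
        (Real.exp (2 * c * s) * (2 * c)) s := by
      have h0 : HasDerivAt (fun r : ℝ => 2 * c * r) (2 * c) s := by
        simpa using (hasDerivAt_id s).const_mul (2 * c)
      exact h0.exp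
    exact he.hasDerivWithinAt.mul hφ
  have hnonpos : ∀ s ∈ Ici (0:ℝ),
      Real.exp (2 * c * s) * (2 * c) * ‖x s - xs‖ ^ 2
        + Real.exp (2 * c * s) * (⟪x s - xs, 𝒢 (x s)⟫ + ⟪𝒢 (x s), x s - xs⟫) ≤ 0 := by
    intro s hs
    have h1 := hcontr (x s) (hx s hs).1
    have h2 : ⟪𝒢 (x s), x s - xs⟫ = ⟪x s - xs, 𝒢 (x s)⟫ := real_inner_comm _ _
    have he := Real.exp_pos (2 * c * s)
    nlinarith [mul_le_mul_of_nonneg_left h1 he.le]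
  have hanti : AntitoneOn g (Ici 0) := by
    apply antitoneOn_of_deriv_nonpos (convex_Ici 0)
    · exact fun s hs => (hderiv s hs).continuousWithinAt
    · intro s hs
      rw [interior_Ici] at hs
      exact ((hderiv s (Set.mem_Ici.mpr (le_of_lt hs))).hasDerivAt
        (Ici_mem_nhds hs)).differentiableAt.differentiableWithinAt
    · intro s hs
      rw [interior_Ici] at hs
      rw [((hderiv s (Set.mem_Ici.mpr (le_of_lt hs))).hasDerivAt (Ici_mem_nhds hs)).deriv]
      exact hnonpos s (Set.mem_Ici.mpr (le_of_lt hs))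
  have hg0 : g t ≤ g 0 := hanti self_mem_Ici ht ht
  have hgt0 : g 0 = ‖x 0 - xs‖ ^ 2 := by simp [hg]
  rw [hgt0] at hg0
  have hsq : ‖x t - xs‖ ^ 2 ≤ (Real.exp (-c * t) * ‖x 0 - xs‖) ^ 2 := by
    have hE : Real.exp (-c * t) ^ 2 * Real.exp (2 * c * t) = 1 := by
      have h0 : -c * t + -c * t + 2 * c * t = 0 := by ring
      rw [sq, ← Real.exp_add, ← Real.exp_add, h0, Real.exp_zero]
    have he1 := Real.exp_pos (2 * c * t)
    have he2 := Real.exp_pos (-c * t)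
    have : g t = Real.exp (2 * c * t) * ‖x t - xs‖ ^ 2 := rfl
    nlinarith [hg0, sq_nonneg (Real.exp (-c * t)), norm_nonneg (x t - xs)]
  calc ‖x t - xs‖ = Real.sqrt (‖x t - xs‖ ^ 2) := (Real.sqrt_sq (norm_nonneg _)).symm
    _ ≤ Real.sqrt ((Real.exp (-c * t) * ‖x 0 - xs‖) ^ 2) := Real.sqrt_le_sqrt hsq
    _ = Real.exp (-c * t) * ‖x 0 - xs‖ := Real.sqrt_sq (by positivity)

/-- Contraction and exponential stability of the safe monotone
flow: if `F` is μ-strongly monotone and ℓ_F-Lipschitz, `C` is polyhedral and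
`α > ℓ_F²/(4μ)`, then the safe monotone flow is contracting at rate
`c = μ − ℓ_F²/(4α)`, and the unique `x* ∈ SOL(F,C)` is globally exponentially
stable. -/
theorem statement14 {n m k : ℕ}
    (F : EuclideanSpace ℝ (Fin n) → EuclideanSpace ℝ (Fin n))
    (hF : ContDiff ℝ 1 F)
    (G : Fin m → EuclideanSpace ℝ (Fin n)) (cg : Fin m → ℝ)
    (H : Fin k → EuclideanSpace ℝ (Fin n)) (ch : Fin k → ℝ)
    (μ : ℝ) (hμ : 0 < μ)
    (hsmono : ∀ x y : EuclideanSpace ℝ (Fin n), μ * ‖x - y‖ ^ 2 ≤ ⟪x - y, F x - F y⟫)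
    (ℓF : ℝ) (hℓF : 0 ≤ ℓF)
    (hlip : ∀ x y : EuclideanSpace ℝ (Fin n), ‖F x - F y‖ ≤ ℓF * ‖x - y‖)
    (α : ℝ) (hα : ℓF ^ 2 / (4 * μ) < α)
    (X : Set (EuclideanSpace ℝ (Fin n))) (hX : IsOpen X)
    (hCX : polyC G cg H ch ⊆ X)
    (hTne : ∀ x ∈ X, (polyTalpha G cg H ch α x).Nonempty)
    (𝒢 : EuclideanSpace ℝ (Fin n) → EuclideanSpace ℝ (Fin n))
    (h𝒢 : ∀ x ∈ X, IsProjOn (polyTalpha G cg H ch α x) (-F x) (𝒢 x)) :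
    -- the flow is contracting at rate `c = μ − ℓ_F²/(4α)` on `X`
    ((∀ x ∈ X, ∀ y ∈ X,
        ⟪x - y, 𝒢 x - 𝒢 y⟫ ≤ -(μ - ℓF ^ 2 / (4 * α)) * ‖x - y‖ ^ 2) ∧
    -- the unique solution of `VI(F,C)` is globally exponentially stable
      (∀ xs ∈ SOL F (polyC G cg H ch),
        ∀ x : ℝ → EuclideanSpace ℝ (Fin n), FlowSol 𝒢 X x →
          ∀ t ≥ (0:ℝ),
            ‖x t - xs‖ ≤ Real.exp (-(μ - ℓF ^ 2 / (4 * α)) * t) * ‖x 0 - xs‖)) := by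
  have hαpos : 0 < α := lt_of_le_of_lt (by positivity) hα
  -- the contraction estimate on `X`
  have hcontr : ∀ x ∈ X, ∀ y ∈ X,
      ⟪x - y, 𝒢 x - 𝒢 y⟫ ≤ -(μ - ℓF ^ 2 / (4 * α)) * ‖x - y‖ ^ 2 := by
    intro x hx y hy
    have hpx := h𝒢 x hx
    have hpy := h𝒢 y hy
    have hvx := proj_vi' (convex_polyTalpha' G cg H ch α x) hpx
    have hvy := proj_vi' (convex_polyTalpha' G cg H ch α y) hpy
    -- the shifted point `𝒢 y + α•y - α•x` belongs to `T_α(x)`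
    have hz1 : (𝒢 y + α • y - α • x) ∈ polyTalpha G cg H ch α x := by
      constructor
      · intro i
        have := hpy.1.1 i
        simp only [inner_add_right, inner_sub_right, real_inner_smul_right]
        linarith
      · intro j
        have := hpy.1.2 j
        simp only [inner_add_right, inner_sub_right, real_inner_smul_right, this]
        ring
    have hz2 : (𝒢 x + α • x - α • y) ∈ polyTalpha G cg H ch α y := by
      constructor
      · intro i
        have := hpx.1.1 i
        simp only [inner_add_right, inner_sub_right, real_inner_smul_right]
        linarith
      · intro j
        have := hpx.1.2 j
        simp only [inner_add_right, inner_sub_right, real_inner_smul_right, this]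
        ring
    exact contraction_core' F 𝒢 x y α μ ℓF hαpos (hsmono x y) (hlip x y)
      (hvx _ hz1) (hvy _ hz2)
  refine ⟨hcontr, ?_⟩
  intro xs hxs x hxsol t ht
  obtain ⟨hxsC, hVI⟩ := hxs
  have hxsX : xs ∈ X := hCX hxsC
  -- the equilibrium condition `𝒢 xs = 0`
  have hGxs : 𝒢 xs = 0 := by
    have hpxs := h𝒢 xs hxsX
    have hvxs := proj_vi' (convex_polyTalpha' G cg H ch α xs) hpxs
    have h0T : (0 : EuclideanSpace ℝ (Fin n)) ∈ polyTalpha G cg H ch α xs := by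
      constructor
      · intro i
        have := hxsC.1 i
        simp only [inner_zero_right]
        nlinarith
      · intro j
        have := hxsC.2 j
        simp only [inner_zero_right, this]
        ring
    have hzineq : ∀ z ∈ polyTalpha G cg H ch α xs, 0 ≤ ⟪z, F xs⟫ := by
      intro z hz
      have hmem : xs + α⁻¹ • z ∈ polyC G cg H ch := by
        constructor
        · intro i
          have h1 := hz.1 i
          have h2 : α⁻¹ * ⟪G i, z⟫ ≤ α⁻¹ * (-α * (⟪G i, xs⟫ - cg i)) :=
            mul_le_mul_of_nonneg_left h1 (by positivity)
          have h3 : α⁻¹ * (-α * (⟪G i, xs⟫ - cg i)) = -(⟪G i, xs⟫ - cg i) := by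
            field_simp
          simp only [inner_add_right, real_inner_smul_right]
          rw [h3] at h2
          linarith
        · intro j
          have h1 := hz.2 j
          have h2 : α⁻¹ * (-α * (⟪H j, xs⟫ - ch j)) = -(⟪H j, xs⟫ - ch j) := by
            field_simp
          simp only [inner_add_right, real_inner_smul_right, h1, h2, hxsC.2 j]
          ring
      have h4 := hVI _ hmem
      have h5 : xs + α⁻¹ • z - xs = α⁻¹ • z := by module
      rw [h5, real_inner_smul_left] at h4
      nlinarith [h4, inv_pos.mpr hαpos]
    have h1 := hvxs 0 h0T
    have h2 := hzineq (𝒢 xs) hpxs.1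
    have h3 : ⟪-F xs - 𝒢 xs, (0 : EuclideanSpace ℝ (Fin n)) - 𝒢 xs⟫
        = ⟪𝒢 xs, F xs⟫ + ‖𝒢 xs‖ ^ 2 := by
      simp only [zero_sub, inner_neg_right, inner_sub_left, inner_neg_left,
        real_inner_self_eq_norm_sq]
      rw [real_inner_comm (F xs) (𝒢 xs)]
      ring
    rw [h3] at h1
    have h6 : ‖𝒢 xs‖ ^ 2 ≤ 0 := by linarith
    have h7 : ‖𝒢 xs‖ = 0 := by nlinarith [norm_nonneg (𝒢 xs)]
    exact norm_eq_zero.mp h7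
  -- exponential decay via the Lyapunov argument
  have hc : ∀ z ∈ X, ⟪z - xs, 𝒢 z⟫ ≤ -(μ - ℓF ^ 2 / (4 * α)) * ‖z - xs‖ ^ 2 := by
    intro z hz
    have := hcontr z hz xs hxsX
    rw [hGxs, sub_zero] at this
    exact this
  exact decay' 𝒢 X xs (μ - ℓF ^ 2 / (4 * α)) hc x hxsol t ht


end
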